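/- Let V be an r×r real symmetric positive definite matrix, ‖V‖ its operator norm, and μ(V) = ‖V‖·‖V⁻¹‖ its condition number. Then the function φ(v) = ‖Vv‖/(1 + vᵀVv) is Lipschitz continuous on ℝ^r with Lipschitz constant L_φ(V) = ‖V‖(1 + μ(V)/2); that is, for all v, ṽ ∈ ℝ^r, |φ(v) − φ(ṽ)| ≤ ‖V‖(1 + μ(V)/2)·‖v − ṽ‖. -/

import Mathlib

/-!
Write `a = ‖V v‖`, `p = vᵀ V v` and likewise `b`, `q` for `w`, and assume `b ≤ a`. Then
`φ(v) - φ(w) = (a - b)/(1 + p) + b (q - p)/((1 + p)(1 + q))`. The first term is at most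
`‖V‖ ‖v - w‖`. For the second, `|p - q| ≤ (a + b) ‖v - w‖` by symmetry of `V`, and the
Cauchy–Schwarz inequality for the form `⟪x, V y⟫` at `(v, V v)` gives `a² ≤ ‖V‖ p`,
`b² ≤ ‖V‖ q`, hence `2 b (a + b) ≤ 4 a b ≤ ‖V‖ (1 + p)(1 + q)`. So `φ` is
`(3/2)‖V‖`-Lipschitz, and `3/2 ≤ 1 + μ(V)/2` because `‖V‖ ≤ ‖V‖ ‖V⁻¹‖ ‖V‖`.
-/

open scoped RealInnerProductSpace

lemma four_mul_mul_le_mul_one_add_mul_one_add {a b p q K : ℝ} (hK : 0 ≤ K) (hp : 0 ≤ p)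
    (hq : 0 ≤ q) (hap : a ^ 2 ≤ K * p) (hbq : b ^ 2 ≤ K * q) :
    4 * (a * b) ≤ K * ((1 + p) * (1 + q)) := by
  have four_mul_le (x : ℝ) : 4 * x ≤ (1 + x) ^ 2 := by nlinarith [sq_nonneg (1 - x)]
  refine le_of_sq_le_sq ?_ (by positivity)
  calc (4 * (a * b)) ^ 2 = 16 * (a ^ 2 * b ^ 2) := by ring
    _ ≤ 16 * ((K * p) * (K * q)) := by gcongr
    _ = K ^ 2 * ((4 * p) * (4 * q)) := by ring
    _ ≤ K ^ 2 * ((1 + p) ^ 2 * (1 + q) ^ 2) := by gcongr <;> apply four_mul_le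
    _ = (K * ((1 + p) * (1 + q))) ^ 2 := by ring

lemma abs_div_one_add_sub_div_one_add_le {a b p q K N d : ℝ} (ha : 0 ≤ a) (hb : 0 ≤ b)
    (hK : 0 ≤ K) (hp : 0 ≤ p) (hq : 0 ≤ q) (hd : 0 ≤ d) (hap : a ^ 2 ≤ K * p)
    (hbq : b ^ 2 ≤ K * q) (hab : |a - b| ≤ N * d) (hpq : |p - q| ≤ (a + b) * d) :
    |a / (1 + p) - b / (1 + q)| ≤ (N + K / 2) * d := by
  wlog hba : b ≤ a generalizing a b p q
  · rw [abs_sub_comm]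
    exact this hb ha hq hp hbq hap (abs_sub_comm a b ▸ hab)
      (by rwa [abs_sub_comm, add_comm]) (le_of_not_ge hba)
  have hp1 : 0 < 1 + p := by positivity
  have hq1 : 0 < 1 + q := by positivity
  have split : a / (1 + p) - b / (1 + q)
      = (a - b) / (1 + p) + b * (q - p) / ((1 + p) * (1 + q)) := by
    field_simp
    ring
  have first_term : |(a - b) / (1 + p)| ≤ N * d := by
    rw [abs_div, abs_of_pos hp1]
    exact (div_le_self (abs_nonneg _) (by linarith)).trans hab
  have second_term : |b * (q - p) / ((1 + p) * (1 + q))| ≤ K / 2 * d := by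
    rw [abs_div, abs_mul, abs_of_nonneg hb, abs_sub_comm q p, abs_of_pos (mul_pos hp1 hq1),
      div_le_iff₀ (mul_pos hp1 hq1)]
    have cross_le : b * (a + b) ≤ K / 2 * ((1 + p) * (1 + q)) := by
      nlinarith [four_mul_mul_le_mul_one_add_mul_one_add hK hp hq hap hbq,
        mul_le_mul_of_nonneg_left hba hb]
    calc b * |p - q| ≤ b * (a + b) * d := by rw [mul_assoc]; gcongr
      _ ≤ K / 2 * ((1 + p) * (1 + q)) * d := by gcongr
      _ = K / 2 * d * ((1 + p) * (1 + q)) := by ring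
  calc |a / (1 + p) - b / (1 + q)|
      ≤ |(a - b) / (1 + p)| + |b * (q - p) / ((1 + p) * (1 + q))| := split ▸ abs_add_le _ _
    _ ≤ (N + K / 2) * d := by linarith

variable {E : Type*} [NormedAddCommGroup E] [InnerProductSpace ℝ E]

namespace LinearMap

theorem IsSymmetric.abs_inner_map_self_sub_le {T : E →ₗ[ℝ] E} (hT : T.IsSymmetric) (x y : E) :
    |⟪x, T x⟫ - ⟪y, T y⟫| ≤ (‖T x‖ + ‖T y‖) * ‖x - y‖ := by
  have split : ⟪x, T x⟫ - ⟪y, T y⟫ = ⟪x - y, T x⟫ + ⟪T y, x - y⟫ := by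
    rw [inner_sub_left, inner_sub_right, hT y x, hT y y]
    ring
  calc |⟪x, T x⟫ - ⟪y, T y⟫| ≤ |⟪x - y, T x⟫| + |⟪T y, x - y⟫| := split ▸ abs_add_le _ _
    _ ≤ ‖x - y‖ * ‖T x‖ + ‖T y‖ * ‖x - y‖ :=
      add_le_add (abs_real_inner_le_norm _ _) (abs_real_inner_le_norm _ _)
    _ = (‖T x‖ + ‖T y‖) * ‖x - y‖ := by ring

end LinearMap

namespace ContinuousLinearMap

theorem IsPositive.norm_apply_sq_le {T : E →L[ℝ] E} (hT : T.IsPositive) (x : E) :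
    ‖T x‖ ^ 2 ≤ ‖T‖ * ⟪x, T x⟫ := by
  let B : LinearMap.BilinForm ℝ E := (innerₗ E).compl₂ (T : E →ₗ[ℝ] E)
  have cauchy_schwarz : ⟪x, T (T x)⟫ * ⟪T x, T x⟫ ≤ ⟪x, T x⟫ * ⟪T x, T (T x)⟫ :=
    B.apply_mul_apply_le_of_forall_zero_le hT.inner_nonneg_right x (T x)
  have hTTx : ⟪T x, T (T x)⟫ ≤ ‖T‖ * ‖T x‖ ^ 2 := by
    calc ⟪T x, T (T x)⟫ ≤ ‖T x‖ * ‖T (T x)‖ := real_inner_le_norm _ _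
      _ ≤ ‖T x‖ * (‖T‖ * ‖T x‖) := by gcongr; exact T.le_opNorm _
      _ = ‖T‖ * ‖T x‖ ^ 2 := by ring
  rw [← hT.inner_left_eq_inner_right, real_inner_self_eq_norm_sq] at cauchy_schwarz
  rcases (sq_nonneg ‖T x‖).eq_or_lt with h | h
  · rw [← h]
    exact mul_nonneg (norm_nonneg T) (hT.inner_nonneg_right x)
  · refine le_of_mul_le_mul_right ?_ h
    calc ‖T x‖ ^ 2 * ‖T x‖ ^ 2 ≤ ⟪x, T x⟫ * ⟪T x, T (T x)⟫ := cauchy_schwarz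
      _ ≤ ⟪x, T x⟫ * (‖T‖ * ‖T x‖ ^ 2) := by gcongr; exact hT.inner_nonneg_right x
      _ = ‖T‖ * ⟪x, T x⟫ * ‖T x‖ ^ 2 := by ring

theorem IsPositive.abs_norm_apply_div_sub_le {T : E →L[ℝ] E} (hT : T.IsPositive) (v w : E) :
    |‖T v‖ / (1 + ⟪v, T v⟫) - ‖T w‖ / (1 + ⟪w, T w⟫)| ≤ (‖T‖ + ‖T‖ / 2) * ‖v - w‖ := by
  refine abs_div_one_add_sub_div_one_add_le (norm_nonneg _) (norm_nonneg _) (norm_nonneg T)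
    (hT.inner_nonneg_right v) (hT.inner_nonneg_right w) (norm_nonneg _)
    (hT.norm_apply_sq_le v) (hT.norm_apply_sq_le w) ?_
    (LinearMap.IsSymmetric.abs_inner_map_self_sub_le hT.isSymmetric v w)
  calc |‖T v‖ - ‖T w‖| ≤ ‖T v - T w‖ := abs_norm_sub_norm_le _ _
    _ = ‖T (v - w)‖ := by rw [map_sub]
    _ ≤ ‖T‖ * ‖v - w‖ := T.le_opNorm _

end ContinuousLinearMap

/-- Let `V` be an `r × r` real symmetric positive definite matrix, `‖V‖`
its operator norm and `μ(V) = ‖V‖ ⬝ ‖V⁻¹‖` its condition number.  Then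
`φ(v) = ‖V v‖ / (1 + vᵀ V v)` is Lipschitz continuous on `ℝ^r` with Lipschitz constant
`L_φ(V) = ‖V‖ (1 + μ(V)/2)`. -/
theorem phi_lipschitz {r : ℕ} (V : Matrix (Fin r) (Fin r) ℝ) (hV : V.PosDef)
    (v w : EuclideanSpace ℝ (Fin r)) :
    |‖(Matrix.toEuclideanCLM (𝕜 := ℝ) V) v‖ /
        (1 + ⟪v, (Matrix.toEuclideanCLM (𝕜 := ℝ) V) v⟫) -
      ‖(Matrix.toEuclideanCLM (𝕜 := ℝ) V) w‖ /
        (1 + ⟪w, (Matrix.toEuclideanCLM (𝕜 := ℝ) V) w⟫)| ≤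
      ‖Matrix.toEuclideanCLM (𝕜 := ℝ) V‖ *
          (1 + (‖Matrix.toEuclideanCLM (𝕜 := ℝ) V‖ *
            ‖Matrix.toEuclideanCLM (𝕜 := ℝ) V⁻¹‖) / 2) * ‖v - w‖ := by
  have hVV : V * V⁻¹ * V = V := by
    rw [Matrix.mul_nonsing_inv V ((Matrix.isUnit_iff_isUnit_det V).mp hV.isUnit), one_mul]
  have hnorm := norm_mul₃_le (a := Matrix.toEuclideanCLM (𝕜 := ℝ) V)
    (b := Matrix.toEuclideanCLM (𝕜 := ℝ) V⁻¹) (c := Matrix.toEuclideanCLM (𝕜 := ℝ) V)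
  rw [← map_mul, ← map_mul, hVV] at hnorm
  set T := Matrix.toEuclideanCLM (𝕜 := ℝ) V
  have hT : T.IsPositive := by
    rw [← ContinuousLinearMap.isPositive_toLinearMap_iff,
      Matrix.coe_toEuclideanCLM_eq_toEuclideanLin, Matrix.isPositive_toEuclideanLin_iff]
    exact hV.posSemidef
  calc _ ≤ (‖T‖ + ‖T‖ / 2) * ‖v - w‖ := hT.abs_norm_apply_div_sub_le v w
    _ ≤ _ := by gcongr; nlinarith
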